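/- Let p ∈ ℝ[z_1,…,z_n] be a polynomial of degree at most k in each variable and let q ∈ ℝ[z_1,…,z_n] be multiaffine. Let Pol(p) be the polarization of p in the nk variables z_{i,j} (i ∈ [n], j ∈ [k]), and define q̃(z_{1,1},…,z_{n,k}) := q(z_{1,1}+⋯+z_{1,k}, …, z_{n,1}+⋯+z_{n,k}). Then evaluating the polynomial q̃(∂)Pol(p) at z_{i,j} = z_i for all i ∈ [n], j ∈ [k] yields exactly the polynomial (q(∂)p)(z_1,…,z_n); this is the identity Sym(q̃(∂)Pol(p)) = q(∂)p. -/

import Mathlib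

/-- degree at most 1 in each variable -/
def MultiAffine {σ : Type*} (p : MvPolynomial σ ℝ) : Prop :=
  ∀ m ∈ p.support, ∀ i, m i ≤ 1

/-- applying the differential-operator monomial `∂^m` to `p` -/
noncomputable def applyMon {σ : Type*} [Fintype σ] (m : σ →₀ ℕ) (p : MvPolynomial σ ℝ) :
    MvPolynomial σ ℝ :=
  (Finset.univ.toList (α := σ)).foldr
    (fun i g => (fun h => MvPolynomial.pderiv i h)^[m i] g) p

/-- `q(∂)p`: substitute `∂/∂zᵢ` for `zᵢ` in `q` and apply the resulting operator to `p`. -/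
noncomputable def diffOp {σ : Type*} [Fintype σ] (q p : MvPolynomial σ ℝ) :
    MvPolynomial σ ℝ :=
  ∑ m ∈ q.support, MvPolynomial.coeff m q • applyMon m p

/-- the polarization of `p ∈ ℝ[z₁,…,zₙ]` (degree at most `k` in each variable) in the
`nk` variables `z_{i,j}`:  each `zᵢ^m` is replaced by `e_m(z_{i,1},…,z_{i,k})/(k choose m)`. -/
noncomputable def polarizeMv {n : ℕ} (k : ℕ) (p : MvPolynomial (Fin n) ℝ) :
    MvPolynomial (Fin n × Fin k) ℝ :=
  ∑ m ∈ p.support,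
    MvPolynomial.C (MvPolynomial.coeff m p) *
      ∏ i : Fin n,
        MvPolynomial.C ((k.choose (m i) : ℝ))⁻¹ *
          MvPolynomial.rename (fun j => (i, j)) (MvPolynomial.esymm (Fin k) ℝ (m i))

/-- `q̃(z_{1,1},…,z_{n,k}) = q(z_{1,1}+⋯+z_{1,k},…,z_{n,1}+⋯+z_{n,k})` -/
noncomputable def tildeQ {n : ℕ} (k : ℕ) (q : MvPolynomial (Fin n) ℝ) :
    MvPolynomial (Fin n × Fin k) ℝ :=
  MvPolynomial.aeval (fun i : Fin n => ∑ j : Fin k, MvPolynomial.X (i, j)) q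

/-!
Write `Sym` for the substitution `z_{i,j} ↦ zᵢ`, i.e. `rename Prod.fst`. The chain rule
`∂ᵢ ∘ Sym = Sym ∘ ∑ⱼ ∂_{i,j}` shows that `Sym` intertwines `q̃(∂)` with `q(∂)`, and
`Sym (Pol p) = p` because `e_m(z, …, z) = (k choose m) zᵐ`, which is nonzero for `m ≤ k`.
-/

open MvPolynomial Finset

theorem List.prod_map_pow_add {ι M : Type*} [Monoid M] (f : ι → M)
    (hf : ∀ i j, Commute (f i) (f j)) (m m' : ι → ℕ) (l : List ι) :
    (l.map fun i => f i ^ (m i + m' i)).prod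
      = (l.map fun i => f i ^ m i).prod * (l.map fun i => f i ^ m' i).prod := by
  induction l with
  | nil => simp
  | cons a l ih =>
    have hcomm : Commute (f a ^ m' a) (l.map fun i => f i ^ m i).prod :=
      Commute.list_prod_right _ _ fun x hx => by
        obtain ⟨i, -, rfl⟩ := List.mem_map.1 hx
        exact (hf a i).pow_pow _ _
    rw [List.map_cons, List.map_cons, List.map_cons, List.prod_cons, List.prod_cons,
      List.prod_cons, ih, pow_add, hcomm.mul_mul_mul_comm]

theorem List.prod_map_pow_single {ι M : Type*} [Monoid M] [DecidableEq ι] (f : ι → M)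
    {l : List ι} (hl : l.Nodup) {a : ι} (ha : a ∈ l) :
    (l.map fun i => f i ^ (Pi.single a 1 : ι → ℕ) i).prod = f a := by
  rw [List.prod_map_eq_pow_single a _ fun i hi _ => by simp [hi],
    List.count_eq_one_of_mem hl ha]
  simp

namespace MvPolynomial

variable {R σ : Type*} [CommSemiring R]

theorem pderiv_pderiv_comm (i j : σ) (p : MvPolynomial σ R) :
    pderiv i (pderiv j p) = pderiv j (pderiv i p) := by
  rcases eq_or_ne i j with rfl | hij
  · rfl
  induction p using MvPolynomial.induction_on' with
  | monomial s a =>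
    simp only [pderiv_monomial, tsub_tsub, add_comm (Finsupp.single i 1)]
    congr 1
    simp [hij, hij.symm]
    ring
  | add p q hp hq => simp [hp, hq]

theorem pderiv_rename_fst {κ : Type*} [Fintype κ] (i : σ) (f : MvPolynomial (σ × κ) R) :
    pderiv i (rename Prod.fst f) = rename Prod.fst (∑ j, pderiv (i, j) f) := by
  classical
  induction f using MvPolynomial.induction_on with
  | C a => simp
  | add p q hp hq => simp [hp, hq, sum_add_distrib]
  | mul_X p x hp =>
    obtain ⟨i', j'⟩ := x
    by_cases h : i' = i <;> simp [hp, sum_add_distrib, pderiv_X, Pi.single_apply, h, mul_sum]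

theorem rename_const_esymm {κ : Type*} [Fintype κ] (i : σ) (t : ℕ) :
    rename (fun _ : κ => i) (esymm κ R t) = (Fintype.card κ).choose t • X i ^ t := by
  rw [esymm, map_sum, ← card_univ, ← card_powersetCard, ← sum_const]
  refine sum_congr rfl fun T hT => ?_
  rw [map_prod]
  simp [mem_powersetCard_univ.1 hT]

end MvPolynomial

section DiffOp

variable {σ : Type*} [Fintype σ]

theorem applyMon_eq_list_prod (m : σ →₀ ℕ) (p : MvPolynomial σ ℝ) :
    applyMon m p = (univ.toList.map fun i => (pderiv i).toLinearMap ^ m i).prod p := by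
  unfold applyMon
  induction univ.toList (α := σ) with
  | nil => rfl
  | cons i l ih => simp [ih, Module.End.pow_apply]

theorem applyMon_zero (p : MvPolynomial σ ℝ) : applyMon 0 p = p := by
  simp [applyMon_eq_list_prod]

theorem applyMon_add (m m' : σ →₀ ℕ) (p : MvPolynomial σ ℝ) :
    applyMon (m + m') p = applyMon m (applyMon m' p) := by
  have hcomm (i j : σ) : Commute (pderiv i).toLinearMap (pderiv j).toLinearMap :=
    LinearMap.ext (pderiv_pderiv_comm (R := ℝ) i j)
  simp only [applyMon_eq_list_prod, Finsupp.coe_add, Pi.add_apply,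
    List.prod_map_pow_add _ hcomm, Module.End.mul_apply]

theorem applyMon_single (i : σ) (p : MvPolynomial σ ℝ) :
    applyMon (Finsupp.single i 1) p = pderiv i p := by
  classical
  rw [applyMon_eq_list_prod, Finsupp.single_eq_pi_single,
    List.prod_map_pow_single _ (nodup_toList _) (mem_toList.2 (mem_univ i))]
  rfl

theorem diffOp_eq_sum_of_support_subset {q : MvPolynomial σ ℝ} {s : Finset (σ →₀ ℕ)}
    (hs : q.support ⊆ s) (p : MvPolynomial σ ℝ) :
    diffOp q p = ∑ m ∈ s, coeff m q • applyMon m p :=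
  sum_subset hs fun m _ hm => by rw [notMem_support_iff.1 hm, zero_smul]

theorem diffOp_add_left (q q' p : MvPolynomial σ ℝ) :
    diffOp (q + q') p = diffOp q p + diffOp q' p := by
  classical
  rw [diffOp_eq_sum_of_support_subset support_add,
    diffOp_eq_sum_of_support_subset (subset_union_left (s₂ := q'.support)),
    diffOp_eq_sum_of_support_subset (subset_union_right (s₁ := q.support)), ← sum_add_distrib]
  simp only [coeff_add, add_smul]

theorem diffOp_sum_left {ι : Type*} (s : Finset ι) (q : ι → MvPolynomial σ ℝ)
    (p : MvPolynomial σ ℝ) :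
    diffOp (∑ i ∈ s, q i) p = ∑ i ∈ s, diffOp (q i) p :=
  map_sum (AddMonoidHom.mk' (diffOp · p) fun q q' => diffOp_add_left q q' p) q s

theorem diffOp_sum_right {ι : Type*} (s : Finset ι) (q : MvPolynomial σ ℝ)
    (p : ι → MvPolynomial σ ℝ) :
    diffOp q (∑ i ∈ s, p i) = ∑ i ∈ s, diffOp q (p i) := by
  simp only [diffOp, applyMon_eq_list_prod, map_sum, smul_sum]
  exact sum_comm

theorem diffOp_monomial (m : σ →₀ ℕ) (c : ℝ) (p : MvPolynomial σ ℝ) :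
    diffOp (monomial m c) p = c • applyMon m p := by
  classical
  rcases eq_or_ne c 0 with rfl | hc
  · simp [diffOp]
  · rw [diffOp, support_monomial, if_neg hc, sum_singleton, coeff_monomial, if_pos rfl]

theorem diffOp_C (c : ℝ) (p : MvPolynomial σ ℝ) : diffOp (C c) p = c • p := by
  rw [C_apply, diffOp_monomial, applyMon_zero]

theorem diffOp_mul_X (q : MvPolynomial σ ℝ) (i : σ) (p : MvPolynomial σ ℝ) :
    diffOp (q * X i) p = diffOp q (pderiv i p) := by
  induction q using MvPolynomial.induction_on' with
  | monomial m c =>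
    rw [X, monomial_mul, mul_one, diffOp_monomial, diffOp_monomial, applyMon_add,
      applyMon_single]
  | add q q' hq hq' => rw [add_mul, diffOp_add_left, diffOp_add_left, hq, hq']

end DiffOp

theorem rename_fst_diffOp_tildeQ {n k : ℕ} (q : MvPolynomial (Fin n) ℝ)
    (f : MvPolynomial (Fin n × Fin k) ℝ) :
    rename Prod.fst (diffOp (tildeQ k q) f) = diffOp q (rename Prod.fst f) := by
  induction q using MvPolynomial.induction_on generalizing f with
  | C a => simp [tildeQ, diffOp_C]
  | add q r hq hr =>
    rw [show tildeQ k (q + r) = tildeQ k q + tildeQ k r from map_add _ q r, diffOp_add_left,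
      map_add, hq, hr, diffOp_add_left]
  | mul_X q i hq =>
    have htilde : tildeQ k (q * X i) = ∑ j, tildeQ k q * X (i, j) := by
      simp [tildeQ, mul_sum]
    rw [htilde, diffOp_sum_left]
    simp only [diffOp_mul_X]
    rw [← diffOp_sum_right, hq, ← pderiv_rename_fst]

theorem rename_fst_polarizeMv {n k : ℕ} {p : MvPolynomial (Fin n) ℝ}
    (hp : ∀ m ∈ p.support, ∀ i, m i ≤ k) : rename Prod.fst (polarizeMv k p) = p := by
  rw [polarizeMv, map_sum]
  conv_rhs => rw [p.as_sum]
  refine sum_congr rfl fun m hm => ?_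
  have hblock (i : Fin n) : C ((k.choose (m i) : ℝ))⁻¹ *
      rename (Prod.fst ∘ fun j : Fin k => (i, j)) (esymm (Fin k) ℝ (m i)) = X i ^ m i := by
    have hchoose : (k.choose (m i) : ℝ) ≠ 0 := by exact_mod_cast (Nat.choose_pos (hp m hm i)).ne'
    rw [Function.comp_def, rename_const_esymm, Fintype.card_fin, nsmul_eq_mul, ← mul_assoc,
      ← map_natCast C, ← C_mul, inv_mul_cancel₀ hchoose, C_1, one_mul]
  simp only [map_mul, map_prod, rename_C, rename_rename, hblock]
  rw [monomial_eq, Finsupp.prod_fintype _ _ fun i => pow_zero _]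

theorem sym_diffOp_polarize_general {n k : ℕ} (p q : MvPolynomial (Fin n) ℝ)
    (hp : ∀ m ∈ p.support, ∀ i, m i ≤ k) :
    MvPolynomial.aeval (fun ij : Fin n × Fin k => MvPolynomial.X ij.1)
        (diffOp (tildeQ k q) (polarizeMv k p)) =
      diffOp q p := by
  rw [show aeval (fun ij : Fin n × Fin k => (X ij.1 : MvPolynomial (Fin n) ℝ))
      = rename Prod.fst from (rename_eq_aeval _).symm,
    rename_fst_diffOp_tildeQ, rename_fst_polarizeMv hp]

/-- `Sym(q̃(∂)Pol(p)) = q(∂)p`: evaluating `q̃(∂)Pol(p)` at `z_{i,j} = zᵢ` yields `q(∂)p`. -/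
theorem sym_diffOp_polarize {n k : ℕ} (p q : MvPolynomial (Fin n) ℝ)
    (hp : ∀ m ∈ p.support, ∀ i, m i ≤ k) (hq : MultiAffine q) :
    MvPolynomial.aeval (fun ij : Fin n × Fin k => MvPolynomial.X ij.1)
        (diffOp (tildeQ k q) (polarizeMv k p)) =
      diffOp q p :=
  sym_diffOp_polarize_general p q hp
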